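/- arXiv:1301.7452 — 2 statements merged into one kernel-verified Lean document; each statement's English description precedes it below -/
import Mathlib

section
/- (Loehr–Warrington ctot formula) Let D be a Young diagram fitting below the diagonal of R_{P,Q} (P = Kp, Q = Kq, p,q coprime positive, K positive). Then ctot_{q/p}(D) := |{c \in D : p·l(c) = q·(a(c)+1)}| + |{c \in D : p·(l(c)+1) = q·a(c)}| = \sum_{v} |W_{in}(v)|·|N_{in}(v)| - K + |N_{in}(0)|, where the sum is over integer labels v of boundary-path vertices, W_{in}(v) is the set of westward boundary edges whose endpoint has label v, and N_{in}(v) the set of northward boundary edges whose endpoint has label v. -/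
/-- A Young diagram: a finite down-closed subset of ℕ². -/
def IsYoung (D : Finset (ℕ × ℕ)) : Prop :=
  ∀ x y x' y', (x, y) ∈ D → x' ≤ x → y' ≤ y → (x', y') ∈ D

/-- Arm length of a box inside the diagram. -/
def arm (D : Finset (ℕ × ℕ)) (c : ℕ × ℕ) : ℕ :=
  (D.filter fun d => d.2 = c.2 ∧ c.1 < d.1).card

/-- Leg length of a box inside the diagram. -/
def leg (D : Finset (ℕ × ℕ)) (c : ℕ × ℕ) : ℕ :=
  (D.filter fun d => d.1 = c.1 ∧ c.2 < d.2).card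

/-- Arm length of a box in the complement of the diagram. -/
def coArm (D : Finset (ℕ × ℕ)) (c : ℕ × ℕ) : ℕ :=
  ((Finset.range c.1).filter fun x' => (x', c.2) ∉ D).card

/-- Leg length of a box in the complement of the diagram. -/
def coLeg (D : Finset (ℕ × ℕ)) (c : ℕ × ℕ) : ℕ :=
  ((Finset.range c.2).filter fun y' => (c.1, y') ∉ D).card

/-- Length of column x of the diagram. -/
def colLen (D : Finset (ℕ × ℕ)) (x : ℕ) : ℕ := (D.filter fun c => c.1 = x).card

/-- Length of row y of the diagram. -/
def rowLen (D : Finset (ℕ × ℕ)) (y : ℕ) : ℕ := (D.filter fun c => c.2 = y).card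

/-- Label of the endpoint of the westward boundary edge in column x.
The boundary path starts at the southeast corner (P,0) with label 0, each
westward step adds q and each northward step subtracts p; the westward edge in
column x ends at the point (x, colLen D x). -/
def wlabel (D : Finset (ℕ × ℕ)) (p q P : ℕ) (x : ℕ) : ℤ :=
  ((P : ℤ) - x) * q - (colLen D x : ℤ) * p

/-- Label of the endpoint of the northward boundary edge in row y: it ends at
the point (rowLen D y, y+1). -/
def nlabel (D : Finset (ℕ × ℕ)) (p q P : ℕ) (y : ℕ) : ℤ :=
  ((P : ℤ) - rowLen D y) * q - ((y : ℤ) + 1) * p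

/-- Number of westward boundary edges entering a vertex labeled v. -/
def Win (D : Finset (ℕ × ℕ)) (p q P : ℕ) (v : ℤ) : ℕ :=
  ((Finset.range P).filter fun x => wlabel D p q P x = v).card

/-- Number of northward boundary edges entering a vertex labeled v. -/
def Nin (D : Finset (ℕ × ℕ)) (p q P Q : ℕ) (v : ℤ) : ℕ :=
  ((Finset.range Q).filter fun y => nlabel D p q P y = v).card

/-- The set of labels of vertices of the boundary graph M(D). -/
def labels (D : Finset (ℕ × ℕ)) (p q P Q : ℕ) : Finset ℤ :=
  ((Finset.range P).image (wlabel D p q P)) ∪ ((Finset.range Q).image (nlabel D p q P))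

/-!
The sum `∑ v, |W_in(v)| |N_in(v)| + |N_in(0)|` counts pairs (westward edge in column `x`,
northward edge in row `y`) whose endpoints carry equal labels, the start vertex `(P, 0)` of the
path counting as a westward edge in column `P`. When the cell `(x, y)` lies in `D`, the labels
agree iff `p l = q (a + 1)`: these pairs give the first half of `ctot`. When it does not,
coprimality of `p` and `q` makes the gap between the two edges `(j p, j q)` for some
`1 ≤ j ≤ K`, and the pair marks a row where the staircase of `D` is entered by its translate by
`(j p, 1 - j q)`; the cells of the second half of `ctot` are the rows where that translate leaves
it again. Along the rows the translate enters exactly once more than it leaves, whence `- K`.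
-/

open Finset

theorem Nat.Coprime.exists_eq_mul_of_mul_eq_mul {p q a b : ℕ} (hpq : p.Coprime q) (hp : 0 < p)
    (h : p * b = q * a) : ∃ j, a = j * p ∧ b = j * q := by
  obtain ⟨j, rfl⟩ := hpq.dvd_of_dvd_mul_left ⟨b, h.symm⟩
  refine ⟨j, mul_comm _ _, Nat.eq_of_mul_eq_mul_left hp ?_⟩
  rw [h]; ring

namespace IsYoung

variable {D : Finset (ℕ × ℕ)}

/-- In `YoungDiagram` the first coordinate indexes rows, so `YoungDiagram.rowLen` /
`YoungDiagram.colLen` are our `colLen` / `rowLen`. -/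
def toYoungDiagram (hD : IsYoung D) : YoungDiagram where
  cells := D
  isLowerSet := fun _ _ hba hb => hD _ _ _ _ hb hba.1 hba.2

theorem colLen_eq (hD : IsYoung D) (x : ℕ) : colLen D x = hD.toYoungDiagram.rowLen x := by
  rw [YoungDiagram.rowLen_eq_card]; rfl

theorem rowLen_eq (hD : IsYoung D) (y : ℕ) : rowLen D y = hD.toYoungDiagram.colLen y := by
  rw [YoungDiagram.colLen_eq_card]; rfl

theorem mem_iff_lt_colLen (hD : IsYoung D) {x y : ℕ} : (x, y) ∈ D ↔ y < colLen D x := by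
  rw [hD.colLen_eq]; exact YoungDiagram.mem_iff_lt_rowLen (μ := hD.toYoungDiagram)

theorem mem_iff_lt_rowLen (hD : IsYoung D) {x y : ℕ} : (x, y) ∈ D ↔ x < rowLen D y := by
  rw [hD.rowLen_eq]; exact YoungDiagram.mem_iff_lt_colLen (μ := hD.toYoungDiagram)

theorem lt_rowLen_iff_lt_colLen (hD : IsYoung D) {x y : ℕ} :
    x < rowLen D y ↔ y < colLen D x :=
  hD.mem_iff_lt_rowLen.symm.trans hD.mem_iff_lt_colLen

theorem rowLen_antitone (hD : IsYoung D) : Antitone (rowLen D) := fun y y' h => by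
  simp only [hD.rowLen_eq]; exact YoungDiagram.colLen_anti _ _ _ h

theorem colLen_eq_iff (hD : IsYoung D) {x t : ℕ} :
    colLen D x = t ↔ rowLen D t ≤ x ∧ (t = 0 ∨ x < rowLen D (t - 1)) := by
  simp only [← not_lt, hD.lt_rowLen_iff_lt_colLen]
  omega

theorem arm_eq (hD : IsYoung D) (x y : ℕ) : arm D (x, y) = rowLen D y - (x + 1) := by
  have : D.filter (fun d => d.2 = y ∧ x < d.1) = (Ioo x (rowLen D y)) ×ˢ {y} := by
    ext ⟨a, b⟩
    simp only [mem_filter, mem_product, mem_Ioo, mem_singleton, hD.mem_iff_lt_rowLen]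
    constructor
    · rintro ⟨h, rfl, hx⟩; exact ⟨⟨hx, h⟩, rfl⟩
    · rintro ⟨⟨hx, h⟩, rfl⟩; exact ⟨h, rfl, hx⟩
  rw [arm, this, card_product, Nat.card_Ioo, card_singleton, mul_one]
  omega

theorem leg_eq (hD : IsYoung D) (x y : ℕ) : leg D (x, y) = colLen D x - (y + 1) := by
  have : D.filter (fun d => d.1 = x ∧ y < d.2) = {x} ×ˢ (Ioo y (colLen D x)) := by
    ext ⟨a, b⟩
    simp only [mem_filter, mem_product, mem_Ioo, mem_singleton, hD.mem_iff_lt_colLen]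
    constructor
    · rintro ⟨h, rfl, hy⟩; exact ⟨rfl, hy, h⟩
    · rintro ⟨rfl, hy, h⟩; exact ⟨h, rfl, hy⟩
  rw [leg, this, card_product, Nat.card_Ioo, card_singleton, one_mul]
  omega

end IsYoung

namespace Staircase

variable (a b : ℕ → ℕ) (M : ℕ)

def entries : Finset ℕ :=
  (range M).filter fun t => (t = 0 ∨ b t < a (t - 1)) ∧ a t ≤ b t

def exits : Finset ℕ :=
  (range M).filter fun t => b (t + 1) < a t ∧ a t ≤ b t

variable {a b M}

@[simp] theorem mem_entries {t : ℕ} :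
    t ∈ entries a b M ↔ t < M ∧ (t = 0 ∨ b t < a (t - 1)) ∧ a t ≤ b t := by
  rw [entries, mem_filter, mem_range]

@[simp] theorem mem_exits {t : ℕ} :
    t ∈ exits a b M ↔ t < M ∧ b (t + 1) < a t ∧ a t ≤ b t := by
  rw [exits, mem_filter, mem_range]

/-- Telescoping: `[t ∈ entries] + H (t + 1) = [t ∈ exits] + H t` for
`H t := t = 0 ∨ b t < a (t - 1)`, where `H 0` holds and `H M` fails. -/
theorem card_entries_eq_card_exits_add_one (ha : Antitone a) (hb : Antitone b) (hM : 0 < M)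
    (hend : a (M - 1) ≤ b M) : #(entries a b M) = #(exits a b M) + 1 := by
  let H : ℕ → ℕ := fun t => if t = 0 ∨ b t < a (t - 1) then 1 else 0
  have step : ∀ t, (if (t = 0 ∨ b t < a (t - 1)) ∧ a t ≤ b t then 1 else 0) + H (t + 1)
      = (if b (t + 1) < a t ∧ a t ≤ b t then 1 else 0) + H t := fun t => by
    have := ha (Nat.sub_le t 1)
    have := hb (Nat.le_add_right t 1)
    simp only [H, Nat.add_sub_cancel, Nat.add_one_ne_zero, false_or]
    split_ifs <;> omega
  have telescope : ∑ t ∈ range M, H (t + 1) + H 0 = ∑ t ∈ range M, H t + H M := by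
    rw [← sum_range_succ', sum_range_succ]
  have hH0 : H 0 = 1 := if_pos (Or.inl rfl)
  have hHM : H M = 0 := if_neg (by omega)
  have := sum_congr rfl fun t (_ : t ∈ range M) => step t
  rw [sum_add_distrib, sum_add_distrib] at this
  rw [entries, exits, card_filter, card_filter]
  omega

end Staircase

theorem wlabel_eq_nlabel_iff {D : Finset (ℕ × ℕ)} {p q P x y : ℕ} :
    wlabel D p q P x = nlabel D p q P y ↔
      q * rowLen D y + p * (y + 1) = q * x + p * colLen D x := by
  rw [wlabel, nlabel, ← Nat.cast_inj (R := ℤ)]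
  push_cast
  constructor <;> intro h <;> linarith

theorem IsYoung.wlabel_eq_nlabel_iff_of_mem {D : Finset (ℕ × ℕ)} (hD : IsYoung D)
    {p q P x y : ℕ} (h : (x, y) ∈ D) :
    wlabel D p q P x = nlabel D p q P y ↔ p * leg D (x, y) = q * (arm D (x, y) + 1) := by
  obtain ⟨a, ha⟩ := Nat.exists_eq_add_of_lt (hD.mem_iff_lt_rowLen.1 h)
  obtain ⟨l, hl⟩ := Nat.exists_eq_add_of_lt (hD.mem_iff_lt_colLen.1 h)
  have harm : arm D (x, y) = a := by rw [hD.arm_eq, ha]; omega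
  have hleg : leg D (x, y) = l := by rw [hD.leg_eq, hl]; omega
  rw [wlabel_eq_nlabel_iff, harm, hleg, ha, hl]
  constructor <;> intro h <;> linarith

theorem IsYoung.exists_of_wlabel_eq_nlabel_of_not_mem {D : Finset (ℕ × ℕ)} (hD : IsYoung D)
    {p q P x y : ℕ} (hp : 0 < p) (hpq : p.Coprime q) (hxy : (x, y) ∉ D)
    (h : wlabel D p q P x = nlabel D p q P y) :
    ∃ j, 0 < j ∧ x = rowLen D y + j * p ∧ y + 1 = colLen D x + j * q := by
  obtain ⟨a, ha⟩ := Nat.exists_eq_add_of_le (not_lt.1 (mt hD.mem_iff_lt_rowLen.2 hxy))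
  obtain ⟨b, hb⟩ := Nat.exists_eq_add_of_le (not_lt.1 (mt hD.mem_iff_lt_colLen.2 hxy))
  rw [wlabel_eq_nlabel_iff] at h
  have hab : p * (b + 1) = q * a := by
    generalize rowLen D y = r at h ha
    generalize colLen D x = c at h hb
    subst ha hb
    linarith
  obtain ⟨j, rfl, hj⟩ := hpq.exists_eq_mul_of_mul_eq_mul hp hab
  exact ⟨j, Nat.pos_of_ne_zero (by rintro rfl; simp at hj), ha, by rw [hb, add_assoc, hj]⟩

theorem sum_Win_mul_Nin (D : Finset (ℕ × ℕ)) (p q P Q : ℕ) :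
    ∑ v ∈ labels D p q P Q, Win D p q P v * Nin D p q P Q v
      = ∑ x ∈ range P, Nin D p q P Q (wlabel D p q P x) := by
  rw [← sum_fiberwise_of_maps_to (t := labels D p q P Q) (g := wlabel D p q P)
    (fun x hx => mem_union_left _ (mem_image_of_mem _ hx))]
  refine sum_congr rfl fun v _ => ?_
  rw [Win, ← smul_eq_mul, ← sum_const]
  exact sum_congr rfl fun x hx => by rw [(mem_filter.1 hx).2]

/-- Column `P` stands for the start `(P, 0)` of the boundary path, which has label `0`. -/
def labelMatches (D : Finset (ℕ × ℕ)) (p q P Q : ℕ) : Finset (ℕ × ℕ) :=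
  (range (P + 1) ×ˢ range Q).filter fun c => wlabel D p q P c.1 = nlabel D p q P c.2

theorem sum_Win_mul_Nin_add_Nin_zero {D : Finset (ℕ × ℕ)} {p q P : ℕ} (Q : ℕ)
    (hP : colLen D P = 0) :
    ∑ v ∈ labels D p q P Q, Win D p q P v * Nin D p q P Q v + Nin D p q P Q 0
      = #(labelMatches D p q P Q) := by
  have hwP : wlabel D p q P P = 0 := by simp [wlabel, hP]
  rw [sum_Win_mul_Nin, ← hwP, ← sum_range_succ, labelMatches, card_filter, sum_product]
  refine sum_congr rfl fun x _ => ?_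
  rw [Nin, card_filter]
  simp only [eq_comm]

def shiftedRowLen (D : Finset (ℕ × ℕ)) (p q j t : ℕ) : ℕ :=
  rowLen D (t + j * q - 1) + j * p

theorem le_shiftedRowLen (D : Finset (ℕ × ℕ)) (p q j t : ℕ) :
    j * p ≤ shiftedRowLen D p q j t :=
  Nat.le_add_left _ _

theorem IsYoung.shiftedRowLen_antitone {D : Finset (ℕ × ℕ)} (hD : IsYoung D) (p q j : ℕ) :
    Antitone (shiftedRowLen D p q j) := fun _ _ h =>
  Nat.add_le_add_right (hD.rowLen_antitone (by omega)) _

theorem IsYoung.mem_filter_mul_leg_add_one_of_mem_exits {D : Finset (ℕ × ℕ)} (hD : IsYoung D)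
    {p q j t M : ℕ} (hq : 0 < q) (hj : 0 < j)
    (ht : t ∈ Staircase.exits (rowLen D) (shiftedRowLen D p q j) M) :
    (rowLen D t - j * p - 1, t) ∈ D.filter fun c => p * (leg D c + 1) = q * arm D c := by
  simp only [Staircase.mem_exits, shiftedRowLen, Nat.add_right_comm t 1,
    Nat.add_sub_cancel] at ht
  obtain ⟨-, hlt, hle⟩ := ht
  have hjq : 0 < j * q := Nat.mul_pos hj hq
  have hcol : colLen D (rowLen D t - j * p - 1) = t + j * q :=
    hD.colLen_eq_iff.2 ⟨by omega, Or.inr (by omega)⟩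
  refine mem_filter.2 ⟨hD.mem_iff_lt_rowLen.2 (by omega), ?_⟩
  rw [hD.arm_eq, hD.leg_eq, hcol,
    show rowLen D t - (rowLen D t - j * p - 1 + 1) = j * p by omega,
    show t + j * q - (t + 1) + 1 = j * q by omega]
  ring

section Diagonal

variable {D : Finset (ℕ × ℕ)} {p q K : ℕ} (hD : IsYoung D)
  (hdiag : ∀ c ∈ D, q * c.1 + p * c.2 + p + q ≤ K * p * q)
include hD hdiag

theorem rowLen_le_of_diag {x y : ℕ} (h : K * p * q < q * x + p * y + p + q) :
    rowLen D y ≤ x :=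
  not_lt.1 fun hx => (hdiag _ (hD.mem_iff_lt_rowLen.2 hx)).not_gt h

theorem colLen_le_of_diag {x y : ℕ} (h : K * p * q < q * x + p * y + p + q) :
    colLen D x ≤ y :=
  not_lt.1 fun hy => (hdiag _ (hD.mem_iff_lt_colLen.2 hy)).not_gt h

theorem rowLen_le_mul (hq : 0 < q) (y : ℕ) : rowLen D y ≤ K * p :=
  rowLen_le_of_diag hD hdiag (by nlinarith)

theorem colLen_le_mul (hp : 0 < p) (x : ℕ) : colLen D x ≤ K * q :=
  colLen_le_of_diag hD hdiag (by nlinarith)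

theorem colLen_mul_eq_zero (hq : 0 < q) : colLen D (K * p) = 0 :=
  Nat.le_zero.1 (colLen_le_of_diag hD hdiag (by nlinarith))

theorem rowLen_mul_sub_one_le (hq : 0 < q) {j : ℕ} (hj : j ≤ K) :
    rowLen D (j * q - 1) ≤ (K - j) * p := by
  rcases Nat.eq_zero_or_pos j with rfl | hj0
  · simpa using rowLen_le_mul hD hdiag hq 0
  obtain ⟨k, rfl⟩ := Nat.exists_eq_add_of_le hj
  have hsub : p * (j * q - 1) + p = p * (j * q) := by
    rw [← Nat.mul_succ, Nat.succ_eq_add_one, Nat.sub_add_cancel (Nat.mul_pos hj0 hq)]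
  refine rowLen_le_of_diag hD hdiag ?_
  rw [Nat.add_sub_cancel_left]
  nlinarith

theorem rowLen_sub_mul_le (hq : 0 < q) {j : ℕ} (hj : j ≤ K) :
    rowLen D ((K - j) * q) ≤ j * p := by
  obtain ⟨k, rfl⟩ := Nat.exists_eq_add_of_le hj
  refine rowLen_le_of_diag hD hdiag ?_
  rw [Nat.add_sub_cancel_left]
  nlinarith

theorem labelMatches_filter_mem (hp : 0 < p) (hq : 0 < q) :
    (labelMatches D p q (K * p) (K * q)).filter (· ∈ D)
      = D.filter fun c => p * leg D c = q * (arm D c + 1) := by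
  ext ⟨x, y⟩
  simp only [labelMatches, mem_filter, mem_product, mem_range]
  constructor
  · rintro ⟨⟨-, h⟩, hm⟩
    exact ⟨hm, (hD.wlabel_eq_nlabel_iff_of_mem hm).1 h⟩
  · rintro ⟨hm, h⟩
    have := rowLen_le_mul hD hdiag hq y
    have := colLen_le_mul hD hdiag hp x
    have := hD.mem_iff_lt_rowLen.1 hm
    have := hD.mem_iff_lt_colLen.1 hm
    exact ⟨⟨⟨by omega, by omega⟩, (hD.wlabel_eq_nlabel_iff_of_mem hm).2 h⟩, hm⟩

theorem shiftedRowLen_mem_labelMatches (hq : 0 < q) {j t : ℕ} (hj : j ∈ Icc 1 K)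
    (ht : t ∈ Staircase.entries (rowLen D) (shiftedRowLen D p q j) ((K - j) * q + 1)) :
    (shiftedRowLen D p q j t, t + j * q - 1)
      ∈ (labelMatches D p q (K * p) (K * q)).filter (· ∉ D) := by
  obtain ⟨hj1, hjK⟩ := mem_Icc.1 hj
  obtain ⟨ht, hstart, hle⟩ := Staircase.mem_entries.1 ht
  have hcol : colLen D (shiftedRowLen D p q j t) = t := hD.colLen_eq_iff.2 ⟨hle, hstart⟩
  have hjq : 0 < j * q := Nat.mul_pos hj1 hq
  have hKq : (K - j) * q + j * q = K * q := by rw [← Nat.add_mul, Nat.sub_add_cancel hjK]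
  have hKp : (K - j) * p + j * p = K * p := by rw [← Nat.add_mul, Nat.sub_add_cancel hjK]
  simp only [labelMatches, mem_filter, mem_product, mem_range, wlabel_eq_nlabel_iff, hcol,
    hD.mem_iff_lt_rowLen]
  refine ⟨⟨⟨?_, by omega⟩, ?_⟩, by simp [shiftedRowLen]⟩
  · rcases hstart with rfl | h
    · have := rowLen_mul_sub_one_le hD hdiag hq hjK
      simp only [shiftedRowLen, zero_add]
      omega
    · have := rowLen_le_mul hD hdiag hq (t - 1)
      omega
  · rw [shiftedRowLen, Nat.sub_add_cancel (by omega)]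
    ring

theorem card_labelMatches_filter_not_mem_eq_sum_card_entries (hp : 0 < p) (hq : 0 < q)
    (hpq : p.Coprime q) :
    #((labelMatches D p q (K * p) (K * q)).filter (· ∉ D))
      = ∑ j ∈ Icc 1 K,
          #(Staircase.entries (rowLen D) (shiftedRowLen D p q j) ((K - j) * q + 1)) := by
  rw [← card_sigma]
  symm
  refine card_bij (fun jt _ => (shiftedRowLen D p q jt.1 jt.2, jt.2 + jt.1 * q - 1))
    (fun jt hjt => shiftedRowLen_mem_labelMatches hD hdiag hq (mem_sigma.1 hjt).1
      (mem_sigma.1 hjt).2) ?_ ?_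
  · rintro ⟨j, t⟩ hjt ⟨j', t'⟩ hjt' h
    simp only [mem_sigma, mem_Icc] at hjt hjt'
    simp only [shiftedRowLen, Prod.mk.injEq] at h
    obtain ⟨hx, hy⟩ := h
    rw [hy] at hx
    obtain rfl : j = j' := Nat.eq_of_mul_eq_mul_right hp (by omega)
    have := Nat.mul_pos hjt.1.1 hq
    obtain rfl : t = t' := by omega
    rfl
  · rintro ⟨x, y⟩ hxy
    simp only [labelMatches, mem_filter, mem_product, mem_range] at hxy
    obtain ⟨⟨⟨hx, hy⟩, hlabel⟩, hxyD⟩ := hxy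
    obtain ⟨j, hj, hxj, hyj⟩ := hD.exists_of_wlabel_eq_nlabel_of_not_mem hp hpq hxyD hlabel
    have hjK : j ≤ K := Nat.le_of_mul_le_mul_right (by omega) hp
    have hKq : (K - j) * q + j * q = K * q := by rw [← Nat.add_mul, Nat.sub_add_cancel hjK]
    have hy' : colLen D x + j * q - 1 = y := by omega
    have hcol := (hD.colLen_eq_iff (x := x)).1 rfl
    refine ⟨⟨j, colLen D x⟩, mem_sigma.2 ⟨mem_Icc.2 ⟨hj, hjK⟩, Staircase.mem_entries.2
      ⟨show colLen D x < (K - j) * q + 1 by omega, ?_⟩⟩, ?_⟩ <;>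
      simp only [shiftedRowLen, hy', ← hxj]
    exact ⟨hcol.2, hcol.1⟩

theorem card_filter_mul_leg_add_one_eq_sum_card_exits (hp : 0 < p) (hq : 0 < q)
    (hpq : p.Coprime q) :
    #(D.filter fun c => p * (leg D c + 1) = q * arm D c)
      = ∑ j ∈ Icc 1 K,
          #(Staircase.exits (rowLen D) (shiftedRowLen D p q j) ((K - j) * q + 1)) := by
  rw [← card_sigma]
  symm
  refine card_bij (fun jt _ => (rowLen D jt.2 - jt.1 * p - 1, jt.2))
    (fun jt hjt => hD.mem_filter_mul_leg_add_one_of_mem_exits hq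
      (mem_Icc.1 (mem_sigma.1 hjt).1).1 (mem_sigma.1 hjt).2) ?_ ?_
  · rintro ⟨j, t⟩ hjt ⟨j', t'⟩ hjt' h
    simp only [mem_sigma, Staircase.mem_exits] at hjt hjt'
    simp only [Prod.mk.injEq] at h
    obtain ⟨hx, rfl⟩ := h
    have := (le_shiftedRowLen D p q j (t + 1)).trans_lt hjt.2.2.1
    have := (le_shiftedRowLen D p q j' (t + 1)).trans_lt hjt'.2.2.1
    obtain rfl : j = j' := Nat.eq_of_mul_eq_mul_right hp (by omega)
    rfl
  · rintro ⟨x, y⟩ hxy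
    obtain ⟨hmem, harmleg⟩ := mem_filter.1 hxy
    obtain ⟨j, harm, hleg⟩ := hpq.exists_eq_mul_of_mul_eq_mul hp harmleg
    rw [hD.arm_eq] at harm
    rw [hD.leg_eq] at hleg
    have hx := hD.mem_iff_lt_rowLen.1 hmem
    have hy := hD.mem_iff_lt_colLen.1 hmem
    have hcolK := colLen_le_mul hD hdiag hp x
    have hj : 0 < j := Nat.pos_of_ne_zero (by rintro rfl; omega)
    have hjK : j ≤ K := Nat.le_of_mul_le_mul_right (by omega) hq
    have hKq : (K - j) * q + j * q = K * q := by rw [← Nat.add_mul, Nat.sub_add_cancel hjK]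
    have hout : rowLen D (y + j * q) ≤ x := not_lt.1 fun h => by
      have := hD.lt_rowLen_iff_lt_colLen.1 h; omega
    have hin : x < rowLen D (y + j * q - 1) := hD.lt_rowLen_iff_lt_colLen.2 (by omega)
    refine ⟨⟨j, y⟩, mem_sigma.2 ⟨mem_Icc.2 ⟨hj, hjK⟩, Staircase.mem_exits.2
      ⟨show y < (K - j) * q + 1 by omega, ?_⟩⟩, ?_⟩
    · simp only [shiftedRowLen, Nat.add_right_comm y 1, Nat.add_sub_cancel]
      omega
    · simp only [Prod.mk.injEq, and_true]
      omega

theorem card_entries_shiftedRowLen_eq_card_exits_add_one (hq : 0 < q) {j : ℕ} (hj : j ≤ K) :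
    #(Staircase.entries (rowLen D) (shiftedRowLen D p q j) ((K - j) * q + 1))
      = #(Staircase.exits (rowLen D) (shiftedRowLen D p q j) ((K - j) * q + 1)) + 1 :=
  Staircase.card_entries_eq_card_exits_add_one hD.rowLen_antitone (hD.shiftedRowLen_antitone p q j)
    (Nat.succ_pos _)
    ((rowLen_sub_mul_le hD hdiag hq hj).trans (le_shiftedRowLen D p q j _))

end Diagonal

theorem LW_ctot_formula_general (D : Finset (ℕ × ℕ)) (hD : IsYoung D)
    (p q K : ℕ) (hp : 0 < p) (hq : 0 < q) (hpq : Nat.Coprime p q)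
    (hdiag : ∀ c ∈ D, q * c.1 + p * c.2 + p + q ≤ K * p * q) :
    (((D.filter fun c => p * leg D c = q * (arm D c + 1)).card : ℤ)
        + ((D.filter fun c => p * (leg D c + 1) = q * arm D c).card : ℤ))
      = (∑ v ∈ labels D p q (K * p) (K * q),
            (Win D p q (K * p) v : ℤ) * (Nin D p q (K * p) (K * q) v : ℤ))
        - (K : ℤ) + (Nin D p q (K * p) (K * q) 0 : ℤ) := by
  have hsum := sum_Win_mul_Nin_add_Nin_zero (p := p) (q := q) (K * q)
    (colLen_mul_eq_zero hD hdiag hq)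
  have hsplit :=
    card_filter_add_card_filter_not (s := labelMatches D p q (K * p) (K * q)) (· ∈ D)
  have hcross : ∑ j ∈ Icc 1 K,
        #(Staircase.entries (rowLen D) (shiftedRowLen D p q j) ((K - j) * q + 1))
      = #(D.filter fun c => p * (leg D c + 1) = q * arm D c) + K := by
    rw [sum_congr rfl fun j hj =>
        card_entries_shiftedRowLen_eq_card_exits_add_one hD hdiag hq (mem_Icc.1 hj).2,
      sum_add_distrib, ← card_filter_mul_leg_add_one_eq_sum_card_exits hD hdiag hp hq hpq]
    simp
  rw [labelMatches_filter_mem hD hdiag hp hq,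
    card_labelMatches_filter_not_mem_eq_sum_card_entries hD hdiag hp hq hpq,
    hcross, ← hsum] at hsplit
  have := congrArg (Nat.cast (R := ℤ)) hsplit
  simp only [Nat.cast_add, Nat.cast_sum, Nat.cast_mul] at this
  linarith

theorem LW_ctot_formula (D : Finset (ℕ × ℕ)) (hD : IsYoung D)
    (p q K : ℕ) (hp : 0 < p) (hq : 0 < q) (hK : 0 < K) (hpq : Nat.Coprime p q)
    (hdiag : ∀ c ∈ D, q * c.1 + p * c.2 + p + q ≤ K * p * q) :
    (((D.filter fun c => p * leg D c = q * (arm D c + 1)).card : ℤ)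
        + ((D.filter fun c => p * (leg D c + 1) = q * arm D c).card : ℤ))
      = (∑ v ∈ labels D p q (K * p) (K * q),
            (Win D p q (K * p) v : ℤ) * (Nin D p q (K * p) (K * q) v : ℤ))
        - (K : ℤ) + (Nin D p q (K * p) (K * q) 0 : ℤ) :=
  LW_ctot_formula_general D hD p q K hp hq hpq hdiag
end

section
/- Let D be a Young diagram and fix non-negative integers a, l. The arrows (r,s) \to (k,m) with displacement (-a-1, l), tail (r,s) \in \overline{D} = (Z_{\geq 0})^2 \ D, head (k,m) \in \widehat{D} = Z^2 \ \overline{D}, that cannot be moved north or west (i.e., (k, m+1) \in \overline{D} and (r-1, s) \in \widehat{D}) and satisfy k, m, r, s \geq 0, are in bijection with boxes (k,s) \in D having arm length a and leg length l, via r = k + a + 1 and m = s + l. -/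
/-- Membership in the complement of the diagram inside the nonnegative
quadrant, for a lattice point of ℤ². -/
def inBar (D : Finset (ℕ × ℕ)) (c : ℤ × ℤ) : Prop :=
  0 ≤ c.1 ∧ 0 ≤ c.2 ∧ (c.1.toNat, c.2.toNat) ∉ D

/-- Membership in ℤ² minus the complement of the diagram
(i.e. the diagram together with all points with a negative coordinate). -/
def inHat (D : Finset (ℕ × ℕ)) (c : ℤ × ℤ) : Prop := ¬ inBar D c

/-- Arm length of a complement box given by integer coordinates. -/
def coArmZ (D : Finset (ℕ × ℕ)) (c : ℤ × ℤ) : ℕ :=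
  ((Finset.range c.1.toNat).filter fun x' => (x', c.2.toNat) ∉ D).card

/-- Leg length of a complement box given by integer coordinates. -/
def coLegZ (D : Finset (ℕ × ℕ)) (c : ℤ × ℤ) : ℕ :=
  ((Finset.range c.2.toNat).filter fun y' => (c.1.toNat, y') ∉ D).card

/-!
In a Young diagram the boxes of row `s` right of `(k, s)` form a segment, so `(k, s)` has arm
`a` exactly when `(k + a, s) ∈ D` and `(k + a + 1, s) ∉ D`; transposing, it has leg `l` exactly
when `(k, s + l) ∈ D` and `(k, s + l + 1) ∉ D`. Once `r = k + a + 1` and `m = s + l`, these four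
memberships are precisely the conditions on the tail, the head and their north and west
neighbours.
-/

variable {D : Finset (ℕ × ℕ)}

def transpose (D : Finset (ℕ × ℕ)) : Finset (ℕ × ℕ) :=
  D.map (Equiv.prodComm ℕ ℕ).toEmbedding

@[simp]
lemma mem_transpose {x y : ℕ} : (x, y) ∈ transpose D ↔ (y, x) ∈ D := by
  simp [transpose]

lemma IsYoung.transpose (hD : IsYoung D) : IsYoung (transpose D) := by
  intro x y x' y' h hx hy
  rw [mem_transpose] at h ⊢
  exact hD y x y' x' h hy hx

lemma leg_eq_arm_transpose (k s : ℕ) : leg D (k, s) = arm (transpose D) (s, k) := by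
  rw [arm, transpose, Finset.filter_map, Finset.card_map]
  rfl

lemma IsYoung.mem_iff_le_add_arm (hD : IsYoung D) {k s x : ℕ} (hks : (k, s) ∈ D)
    (hkx : k ≤ x) : (x, s) ∈ D ↔ x ≤ k + arm D (k, s) := by
  constructor
  · intro hxs
    have hsub : (Finset.Ioc k x).image (fun y => (y, s)) ⊆
        D.filter fun d => d.2 = s ∧ k < d.1 := by
      intro d hd
      obtain ⟨y, hy, rfl⟩ := Finset.mem_image.1 hd
      rw [Finset.mem_Ioc] at hy
      exact Finset.mem_filter.2 ⟨hD x s y s hxs hy.2 le_rfl, rfl, hy.1⟩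
    have hcard := Finset.card_le_card hsub
    rw [Finset.card_image_of_injective _ (Prod.mk_left_injective s), Nat.card_Ioc] at hcard
    simp only [arm]
    omega
  · intro hle
    by_contra hxs
    have hsub : (D.filter fun d => d.2 = s ∧ k < d.1) ⊆
        (Finset.Ioo k x).image (fun y => (y, s)) := by
      rintro ⟨y, t⟩ hd
      obtain ⟨hyt, rfl, hky⟩ := Finset.mem_filter.1 hd
      have hyx : y < x := by
        by_contra! hxy
        exact hxs (hD y t x t hyt hxy le_rfl)
      exact Finset.mem_image.2 ⟨y, Finset.mem_Ioo.2 ⟨hky, hyx⟩, rfl⟩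
    have hcard := Finset.card_le_card hsub
    rw [Finset.card_image_of_injective _ (Prod.mk_left_injective s), Nat.card_Ioo] at hcard
    simp only [arm] at hle
    obtain rfl : x = k := by omega
    exact hxs hks

lemma IsYoung.mem_and_arm_eq_iff (hD : IsYoung D) {k s a : ℕ} :
    (k, s) ∈ D ∧ arm D (k, s) = a ↔ (k + a, s) ∈ D ∧ (k + a + 1, s) ∉ D := by
  constructor
  · rintro ⟨hks, rfl⟩
    rw [hD.mem_iff_le_add_arm hks (by omega), hD.mem_iff_le_add_arm hks (by omega)]
    omega
  · rintro ⟨hlast, hnext⟩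
    have hks : (k, s) ∈ D := hD _ _ _ _ hlast (by omega) le_rfl
    rw [hD.mem_iff_le_add_arm hks (by omega)] at hlast
    rw [hD.mem_iff_le_add_arm hks (by omega)] at hnext
    exact ⟨hks, by omega⟩

lemma IsYoung.mem_and_leg_eq_iff (hD : IsYoung D) {k s l : ℕ} :
    (k, s) ∈ D ∧ leg D (k, s) = l ↔ (k, s + l) ∈ D ∧ (k, s + l + 1) ∉ D := by
  simpa only [leg_eq_arm_transpose, mem_transpose] using
    hD.transpose.mem_and_arm_eq_iff (k := s) (s := k) (a := l)

lemma IsYoung.hook_ends_iff (hD : IsYoung D) {k s a l : ℕ} :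
    (k + a + 1, s) ∉ D ∧ (k, s + l) ∈ D ∧ (k, s + l + 1) ∉ D ∧ (k + a, s) ∈ D ↔
      (k, s) ∈ D ∧ arm D (k, s) = a ∧ leg D (k, s) = l := by
  have harm := hD.mem_and_arm_eq_iff (k := k) (s := s) (a := a)
  have hleg := hD.mem_and_leg_eq_iff (k := k) (s := s) (l := l)
  tauto

theorem arrows_boxes_inside (D : Finset (ℕ × ℕ)) (hD : IsYoung D) (a l : ℕ) :
    ∀ r s k m : ℤ,
      (k = r - (a + 1) ∧ m = s + l ∧ inBar D (r, s) ∧ inHat D (k, m) ∧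
       inBar D (k, m + 1) ∧ inHat D (r - 1, s) ∧ 0 ≤ k ∧ 0 ≤ m ∧ 0 ≤ r ∧ 0 ≤ s)
      ↔ (0 ≤ k ∧ 0 ≤ s ∧ (k.toNat, s.toNat) ∈ D ∧
         arm D (k.toNat, s.toNat) = a ∧ leg D (k.toNat, s.toNat) = l ∧
         r = k + (a + 1) ∧ m = s + l) := by
  intro r s k m
  by_cases hpos : 0 ≤ k ∧ 0 ≤ s ∧ r = k + (a + 1) ∧ m = s + l
  · obtain ⟨hk, hs, rfl, rfl⟩ := hpos
    obtain ⟨K, rfl⟩ := Int.eq_ofNat_of_zero_le hk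
    obtain ⟨S, rfl⟩ := Int.eq_ofNat_of_zero_le hs
    have e1 : ((K : ℤ) + (a + 1)).toNat = K + a + 1 := by omega
    have e2 : ((K : ℤ) + (a + 1) - 1).toNat = K + a := by omega
    have e3 : ((S : ℤ) + l).toNat = S + l := by omega
    have e4 : ((S : ℤ) + l + 1).toNat = S + l + 1 := by omega
    have h1 : (0 : ℤ) ≤ K + (a + 1) := by positivity
    have h2 : (0 : ℤ) ≤ K + (a + 1) - 1 := by omega
    have h3 : (0 : ℤ) ≤ S + l := by positivity
    have h4 : (0 : ℤ) ≤ S + l + 1 := by positivity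
    simp only [inBar, inHat, e1, e2, e3, e4, h1, h2, h3, h4, Int.toNat_natCast, Nat.cast_nonneg,
      add_sub_cancel_right, not_not, true_and, and_true]
    exact hD.hook_ends_iff
  · refine iff_of_false ?_ ?_
    · rintro ⟨hk, hm, ⟨-, hs, -⟩, -, -, -, hk0, -⟩
      exact hpos ⟨hk0, hs, by omega, hm⟩
    · rintro ⟨hk, hs, -, -, -, hr, hm⟩
      exact hpos ⟨hk, hs, hr, hm⟩
end
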